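/- arXiv:1508.00934 — 6 statements merged into one kernel-verified Lean document; each statement's English description precedes it below -/
import Mathlib

section
/- Let P₁,…,Pₙ be random variables in [0,1] and for each subset u ⊆ {1,…,n} with |u| = n−r+1 let g_u be a measurable function of the coordinates in u such that whenever the parameter θ satisfies θⱼ ∈ Θ₀ⱼ for all j ∈ u, Pr_θ(g_u(P_u) ≤ α) ≤ α for all α. Then f*(P) = max over all such u of g_u(P_u) satisfies: for every θ in the partial conjunction null Θ₀^{r/n} (at most r−1 components are non-null), Pr_θ(f*(P) ≤ α) ≤ α for all α ∈ [0,1]. -/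
/-!
If at most `r - 1` coordinates of `θ` are non-null, some `u` of size `n - r + 1` consists of null
coordinates only. The maximum `f*` dominates `g_u` pointwise, so `{f* ≤ α} ⊆ {g_u ≤ α}` and the
validity of `g_u` transfers to `f*`, whatever the joint law of the p-values.
-/

open MeasureTheory
open scoped Classical

theorem Finset.exists_card_eq_forall_of_card_filter_not_le {ι : Type*} [Fintype ι]
    (p : ι → Prop) [DecidablePred p] {r : ℕ} (hr1 : 1 ≤ r) (hr : r ≤ Fintype.card ι)
    (hp : (univ.filter fun i => ¬ p i).card ≤ r - 1) :
    ∃ u : Finset ι, u.card = Fintype.card ι - r + 1 ∧ ∀ i ∈ u, p i := by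
  have hsplit := card_filter_add_card_filter_not (s := (univ : Finset ι)) p
  rw [card_univ] at hsplit
  obtain ⟨u, hu, hu_card⟩ :=
    exists_subset_card_eq (s := univ.filter p) (n := Fintype.card ι - r + 1) (by omega)
  exact ⟨u, hu_card, fun i hi => (mem_filter.mp (hu hi)).2⟩

theorem le_sSup_setOf_exists_eq_of_finite {ι : Type*} [Finite ι] {S : ι → Prop} (F : ι → ℝ)
    {i : ι} (hi : S i) : F i ≤ sSup {x | ∃ j, S j ∧ x = F j} := by
  have hsub : {x | ∃ j, S j ∧ x = F j} ⊆ Set.range F := by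
    rintro _ ⟨j, -, rfl⟩
    exact ⟨j, rfl⟩
  exact le_csSup ((Set.finite_range F).subset hsub).bddAbove ⟨i, hi, rfl⟩

theorem gbhpc_valid_general
    {Ω Θ' : Type*} [MeasurableSpace Ω] (n r : ℕ) (hr1 : 1 ≤ r) (hrn : r ≤ n)
    (Pr : (Fin n → Θ') → Measure Ω)
    (Θ0 : Fin n → Set Θ') (P : Fin n → Ω → ℝ)
    (g : Finset (Fin n) → (Fin n → ℝ) → ℝ)
    (hval : ∀ u : Finset (Fin n), u.card = n - r + 1 →
      ∀ θ : Fin n → Θ', (∀ j ∈ u, θ j ∈ Θ0 j) →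
        ∀ α ∈ Set.Icc (0:ℝ) 1,
          Pr θ {ω | g u (fun i => P i ω) ≤ α} ≤ ENNReal.ofReal α) :
    ∀ θ : Fin n → Θ',
      (Finset.univ.filter (fun i => θ i ∉ Θ0 i)).card ≤ r - 1 →
      ∀ α ∈ Set.Icc (0:ℝ) 1,
        Pr θ {ω | sSup {x : ℝ | ∃ u : Finset (Fin n), u.card = n - r + 1 ∧
          x = g u (fun i => P i ω)} ≤ α} ≤ ENNReal.ofReal α := by
  intro θ hθ α hα
  obtain ⟨u, hu_card, hu_null⟩ := Finset.exists_card_eq_forall_of_card_filter_not_le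
    (fun i => θ i ∈ Θ0 i) hr1 (by simpa using hrn) hθ
  rw [Fintype.card_fin] at hu_card
  refine (measure_mono fun ω hω => ?_).trans (hval u hu_card θ hu_null α hα)
  exact (le_sSup_setOf_exists_eq_of_finite (fun v => g v fun i => P i ω) hu_card).trans hω

theorem gbhpc_valid
    {Ω Θ' : Type*} [MeasurableSpace Ω] (n r : ℕ) (hr1 : 1 ≤ r) (hrn : r ≤ n)
    (Pr : (Fin n → Θ') → Measure Ω) (hprob : ∀ θ, IsProbabilityMeasure (Pr θ))
    (Θ0 : Fin n → Set Θ') (P : Fin n → Ω → ℝ)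
    (g : Finset (Fin n) → (Fin n → ℝ) → ℝ)
    (hval : ∀ u : Finset (Fin n), u.card = n - r + 1 →
      ∀ θ : Fin n → Θ', (∀ j ∈ u, θ j ∈ Θ0 j) →
        ∀ α ∈ Set.Icc (0:ℝ) 1,
          Pr θ {ω | g u (fun i => P i ω) ≤ α} ≤ ENNReal.ofReal α) :
    ∀ θ : Fin n → Θ',
      (Finset.univ.filter (fun i => θ i ∉ Θ0 i)).card ≤ r - 1 →
      ∀ α ∈ Set.Icc (0:ℝ) 1,
        Pr θ {ω | sSup {x : ℝ | ∃ u : Finset (Fin n), u.card = n - r + 1 ∧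
          x = g u (fun i => P i ω)} ≤ α} ≤ ENNReal.ofReal α :=
  gbhpc_valid_general n r hr1 hrn Pr Θ0 P g hval
end

section
/- Let f* : [0,1]ⁿ → [0,1] be given by f*(p) = max over subsets u of size k = n−r+1 of g_u(p_u), where each g_u : [0,1]^k → [0,1] is nondecreasing in each coordinate. If f* is sensitive (for every subset v of size r, liminf of f*(p) as all coordinates in v tend to 0 is 0), then each g_u is sensitive for the global null on u, i.e. for every i ∈ u, liminf of g_u(p_u) as pᵢ → 0 is 0. -/
theorem gbhpc_sensitive_components
    (n r : ℕ) (hr1 : 1 ≤ r) (hrn : r ≤ n)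
    (g : Finset (Fin n) → (Fin n → ℝ) → ℝ)
    (hmono : ∀ u, Monotone (g u))
    (hdep : ∀ u, ∀ p q : Fin n → ℝ, (∀ i ∈ u, p i = q i) → g u p = g u q)
    (hrange : ∀ u, ∀ p : Fin n → ℝ, (∀ i, p i ∈ Set.Icc (0:ℝ) 1) →
      g u p ∈ Set.Icc (0:ℝ) 1)
    (hsens : ∀ v : Finset (Fin n), v.card = r → ∀ ε > (0:ℝ), ∀ δ > (0:ℝ),
      ∃ p : Fin n → ℝ, (∀ i, p i ∈ Set.Icc (0:ℝ) 1) ∧ (∀ i ∈ v, p i < δ) ∧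
        sSup {x : ℝ | ∃ u : Finset (Fin n), u.card = n - r + 1 ∧ x = g u p} < ε) :
    ∀ u : Finset (Fin n), u.card = n - r + 1 → ∀ i ∈ u,
      ∀ ε > (0:ℝ), ∀ δ > (0:ℝ),
        ∃ p : Fin n → ℝ, (∀ j, p j ∈ Set.Icc (0:ℝ) 1) ∧ p i < δ ∧ g u p < ε := by
  intro u hu i hi ε hε δ hδ
  obtain ⟨v, hiv, hv⟩ : ∃ v : Finset (Fin n), {i} ⊆ v ∧ v.card = r := by
    apply Finset.exists_superset_card_eq
    · simpa using hr1
    · simpa using hrn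
  obtain ⟨p, hp01, hpv, hsup⟩ := hsens v hv ε hε δ hδ
  refine ⟨p, hp01, hpv i (hiv (Finset.mem_singleton_self i)), ?_⟩
  have hmem : g u p ∈ {x : ℝ | ∃ u : Finset (Fin n), u.card = n - r + 1 ∧ x = g u p} :=
    ⟨u, hu, rfl⟩
  have hbdd : BddAbove {x : ℝ | ∃ u : Finset (Fin n), u.card = n - r + 1 ∧ x = g u p} := by
    refine ⟨1, ?_⟩
    rintro x ⟨w, -, rfl⟩
    exact (hrange w p hp01).2
  exact lt_of_le_of_lt (le_csSup hbdd hmem) hsup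
end

section
/- Let P₁,…,Pₙ be independent valid p-values and let g : [0,1]^{n−r+1} → [0,1] be a symmetric, nondecreasing function such that g(Q₁,…,Q_{n−r+1}) is a valid p-value whenever Q₁,…,Q_{n−r+1} are independent valid p-values. Then P_{r/n} := g(P_{(r)}, P_{(r+1)}, …, P_{(n)}), the function of the n−r+1 largest order statistics, is a valid p-value for the partial conjunction null H₀^{r/n}: for every θ with at most r−1 non-null components, Pr_θ(P_{r/n} ≤ α) ≤ α for all α. -/
/-!
Under the partial conjunction null at least `n - r + 1` of the components are true nulls; pick
`n - r + 1` of them. Their p-values are independent and valid, so `g` of them is a valid p-value.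
Dropping `r - 1` coordinates lowers the rank of each value by at most `r - 1`, so the
`j`-th smallest of the chosen p-values is at most `P_{(r + j)}`; as `g` is symmetric and
nondecreasing, `g` of the chosen p-values dominates `P_{r/n}`, which is therefore valid too.
-/

open Finset

theorem Tuple.lt_card_le_iff_apply_sort_le {n : ℕ} {α : Type*} [LinearOrder α]
    (f : Fin n → α) (j : Fin n) (a : α) :
    j < #{i | f i ≤ a} ↔ f (Tuple.sort f j) ≤ a := by
  have hperm : #{i | (f ∘ Tuple.sort f) i ≤ a} = #{i | f i ≤ a} :=
    card_equiv (Tuple.sort f) (by simp)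
  rw [← Function.comp_apply (f := f), ← hperm,
    Tuple.lt_card_le_iff_apply_le_of_monotone (Tuple.monotone_sort f)]

theorem Finset.card_filter_le_card_filter_comp_add {α β : Type*} [Fintype α] [Fintype β]
    (e : β ↪ α) (p : α → Prop) [DecidablePred p] :
    #{a | p a} ≤ #{b | p (e b)} + (Fintype.card α - Fintype.card β) := by
  classical
  have hsub : ({a | p a} : Finset α) ⊆ ({b | p (e b)} : Finset β).map e ∪ (univ.map e)ᶜ := by
    intro a ha
    by_cases hae : a ∈ univ.map e
    · obtain ⟨b, -, rfl⟩ := mem_map.mp hae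
      exact mem_union_left _ (mem_map_of_mem e (by simpa using ha))
    · exact mem_union_right _ (mem_compl.mpr hae)
  calc #{a | p a} ≤ #(({b | p (e b)} : Finset β).map e ∪ (univ.map e)ᶜ) := card_le_card hsub
    _ ≤ _ := card_union_le _ _
    _ = _ := by rw [card_map, card_compl, card_map, card_univ]

theorem Tuple.apply_sort_comp_le_apply_sort {α : Type*} [LinearOrder α] {N n : ℕ}
    (p : Fin n → α) (e : Fin N ↪ Fin n) {j : Fin N} {m : Fin n} (hjm : n - N + j ≤ m) :
    p (e (Tuple.sort (p ∘ e) j)) ≤ p (Tuple.sort p m) := by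
  have hm := (Tuple.lt_card_le_iff_apply_sort_le p m _).mpr le_rfl
  have hrestrict := card_filter_le_card_filter_comp_add e (p · ≤ p (Tuple.sort p m))
  simp only [Fintype.card_fin] at hrestrict
  exact (Tuple.lt_card_le_iff_apply_sort_le (p ∘ e) j _).mp
    (by simp only [Function.comp_apply]; omega)

theorem exists_fin_embedding_forall_of_le_card_filter {α : Type*} [Fintype α] {m : ℕ}
    {p : α → Prop} [DecidablePred p] (h : m ≤ #{a | p a}) : ∃ e : Fin m ↪ α, ∀ k, p (e k) := by
  obtain ⟨e⟩ := Function.Embedding.nonempty_of_card_le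
    (α := Fin m) (β := {a // p a}) (by rwa [Fintype.card_fin, Fintype.card_subtype])
  exact ⟨e.trans (Function.Embedding.subtype p), fun k => (e k).2⟩

theorem apply_comp_le_apply_upper_order_stats {α β : Type*} [LinearOrder α] [Preorder β]
    {N n : ℕ} {g : (Fin N → α) → β} (hg_mono : Monotone g)
    (hg_sym : ∀ (σ : Equiv.Perm (Fin N)) (q : Fin N → α), g (q ∘ σ) = g q)
    (p : Fin n → α) (e : Fin N ↪ Fin n) (m : Fin N → Fin n) (hm : ∀ j, n - N + j ≤ m j) :
    g (p ∘ e) ≤ g (fun j => p (Tuple.sort p (m j))) :=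
  calc g (p ∘ e) = g ((p ∘ e) ∘ Tuple.sort (p ∘ e)) := (hg_sym _ _).symm
    _ ≤ _ := hg_mono fun j => Tuple.apply_sort_comp_le_apply_sort p e (hm j)

open MeasureTheory ProbabilityTheory
open scoped Classical

theorem benjamini_heller_partial_conjunction
    {Ω Θ' : Type*} [MeasurableSpace Ω] (n r : ℕ) (hr1 : 1 ≤ r) (hrn : r ≤ n)
    (Pr : (Fin n → Θ') → Measure Ω) (hprob : ∀ θ, IsProbabilityMeasure (Pr θ))
    (Θ0 : Fin n → Set Θ') (P : Fin n → Ω → ℝ)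
    (hPmeas : ∀ i, Measurable (P i))
    (hindep : ∀ θ, iIndepFun P (Pr θ))
    (hvalid : ∀ θ : Fin n → Θ', ∀ i, θ i ∈ Θ0 i →
      ∀ α ∈ Set.Icc (0:ℝ) 1, Pr θ {ω | P i ω ≤ α} ≤ ENNReal.ofReal α)
    (g : (Fin (n - r + 1) → ℝ) → ℝ)
    (hg_mono : Monotone g)
    (hg_sym : ∀ (σ : Equiv.Perm (Fin (n - r + 1))) (q : Fin (n - r + 1) → ℝ),
      g (q ∘ σ) = g q)
    (hg_valid : ∀ (ν : Measure Ω), IsProbabilityMeasure ν →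
      ∀ Q : Fin (n - r + 1) → Ω → ℝ, (∀ i, Measurable (Q i)) →
        iIndepFun Q ν →
        (∀ i, ∀ α ∈ Set.Icc (0:ℝ) 1, ν {ω | Q i ω ≤ α} ≤ ENNReal.ofReal α) →
        ∀ α ∈ Set.Icc (0:ℝ) 1,
          ν {ω | g (fun i => Q i ω) ≤ α} ≤ ENNReal.ofReal α) :
    ∀ θ : Fin n → Θ',
      (Finset.univ.filter (fun i => θ i ∉ Θ0 i)).card ≤ r - 1 →
      ∀ α ∈ Set.Icc (0:ℝ) 1,
        Pr θ {ω | g (fun j => (fun i => P i ω)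
          (Tuple.sort (fun i => P i ω) ⟨r - 1 + j.1, by have := j.isLt; omega⟩)) ≤ α}
          ≤ ENNReal.ofReal α := by
  intro θ hθ α hα
  have hnulls : n - r + 1 ≤ (Finset.univ.filter (fun i => θ i ∈ Θ0 i)).card := by
    have := Finset.card_filter_add_card_filter_not (s := Finset.univ) (fun i => θ i ∈ Θ0 i)
    rw [Finset.card_univ, Fintype.card_fin] at this
    omega
  obtain ⟨e, he⟩ := exists_fin_embedding_forall_of_le_card_filter hnulls
  have hgQ := hg_valid (Pr θ) (hprob θ) (fun k => P (e k)) (fun k => hPmeas (e k))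
    ((hindep θ).precomp e.injective) (fun k => hvalid θ (e k) (he k)) α hα
  refine le_trans (measure_mono fun ω hω => ?_) hgQ
  exact (apply_comp_le_apply_upper_order_stats hg_mono hg_sym (fun i => P i ω) e _
    fun j => by simp only; omega).trans hω
end

section
/- (Simes' inequality / validity of Simes' p-value.) If P₁,…,P_k are independent random variables each uniformly distributed on [0,1] (or stochastically larger than uniform), then the Simes combined p-value p_S = min over i of (k · P_{(i)} / i), where P_{(1)} ≤ … ≤ P_{(k)} are the order statistics, satisfies Pr(p_S ≤ α) ≤ α for all α ∈ [0,1], with equality when the Pᵢ are exactly uniform. -/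
/-!
Let `R` be the number of rejections of the Benjamini–Hochberg step-up procedure at level `α`:
the largest `r ≤ k` such that at least `r` of the `Pᵢ` are at most `r α / k`. Simes' p-value is at
most `α` exactly when `R ≥ 1`, and by maximality of `R` exactly `R` of the `Pᵢ` are at most
`R α / k`. Hence `r P(R = r) = ∑ᵢ P(R = r, Pᵢ ≤ r α / k)`. On `{Pᵢ ≤ r α / k}` the event `{R = r}`
is unchanged when `Pᵢ` is replaced by `0`, and the resulting count `Rᵢ` depends only on the other
`Pⱼ`, so by independence `P(R = r) = ∑ᵢ P(Rᵢ = r) P(Pᵢ ≤ r α / k) / r ≤ (α / k) ∑ᵢ P(Rᵢ = r)`,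
with equality for uniform `Pᵢ`. As `1 ≤ Rᵢ ≤ k` always, summing over `r` gives `P(R ≥ 1) ≤ α`.
-/

open MeasureTheory ProbabilityTheory

namespace Simes

open scoped Finset

section Counting

variable {ι : Type*} [Fintype ι]

noncomputable def countLE (x : ι → ℝ) (t : ℝ) : ℕ := #{j | x j ≤ t}

/-- The number of hypotheses rejected by the Benjamini–Hochberg step-up procedure with
thresholds `r * c`. -/
noncomputable def stepUp (c : ℝ) (x : ι → ℝ) : ℕ :=
  Nat.findGreatest (fun r => r ≤ countLE x (r * c)) (Fintype.card ι)

lemma countLE_mono (x : ι → ℝ) {s t : ℝ} (hst : s ≤ t) : countLE x s ≤ countLE x t :=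
  Finset.card_le_card fun j hj => by
    simp only [Finset.mem_filter, Finset.mem_univ, true_and] at hj ⊢
    exact hj.trans hst

lemma countLE_le_card (x : ι → ℝ) (t : ℝ) : countLE x t ≤ Fintype.card ι :=
  (Finset.card_filter_le _ _).trans_eq Finset.card_univ

lemma countLE_update_of_le [DecidableEq ι] {x : ι → ℝ} {i : ι} {a t : ℝ} (hx : x i ≤ t)
    (ha : a ≤ t) : countLE (Function.update x i a) t = countLE x t := by
  unfold countLE
  congr 1
  refine Finset.filter_congr fun j _ => ?_
  rcases eq_or_ne j i with rfl | hj
  · simp [hx, ha]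
  · rw [Function.update_of_ne hj]

lemma stepUp_le_card (c : ℝ) (x : ι → ℝ) : stepUp c x ≤ Fintype.card ι :=
  Nat.findGreatest_le _

lemma countLE_stepUp {c : ℝ} (hc : 0 ≤ c) (x : ι → ℝ) :
    countLE x (stepUp c x * c) = stepUp c x := by
  set r := stepUp c x
  refine le_antisymm ?_ (Nat.findGreatest_spec (P := fun r => r ≤ countLE x (r * c)) (m := 0)
    (Nat.zero_le _) (Nat.zero_le _))
  rcases (stepUp_le_card c x).lt_or_eq with hr | hr
  · have hnext : ¬ r + 1 ≤ countLE x ((r + 1 : ℕ) * c) :=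
      Nat.findGreatest_is_greatest (P := fun r => r ≤ countLE x (r * c)) (Nat.lt_succ_self r) hr
    have hmono : countLE x (r * c) ≤ countLE x ((r + 1 : ℕ) * c) :=
      countLE_mono x (mul_le_mul_of_nonneg_right (by simp) hc)
    omega
  · exact (countLE_le_card x _).trans_eq hr.symm

lemma _root_.Nat.findGreatest_eq_iff_of_forall_ge {P Q : ℕ → Prop} [DecidablePred P]
    [DecidablePred Q] {n r : ℕ} (hPQ : ∀ s, r ≤ s → (P s ↔ Q s)) :
    Nat.findGreatest P n = r ↔ Nat.findGreatest Q n = r := by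
  have transfer : ∀ {P Q : ℕ → Prop} [DecidablePred P] [DecidablePred Q],
      (∀ s, r ≤ s → (P s ↔ Q s)) → Nat.findGreatest P n = r → Nat.findGreatest Q n = r := by
    intro P Q _ _ hPQ h
    rw [Nat.findGreatest_eq_iff] at h ⊢
    obtain ⟨hrn, hr, hgt⟩ := h
    exact ⟨hrn, fun h0 => (hPQ r le_rfl).mp (hr h0),
      fun s hs hsn hQ => hgt hs hsn ((hPQ s hs.le).mpr hQ)⟩
  exact ⟨transfer hPQ, transfer fun s hs => (hPQ s hs).symm⟩

lemma stepUp_update_zero_eq_iff [DecidableEq ι] {c : ℝ} (hc : 0 ≤ c) {x : ι → ℝ} {i : ι}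
    {r : ℕ} (hx : x i ≤ r * c) :
    stepUp c (Function.update x i 0) = r ↔ stepUp c x = r := by
  refine Nat.findGreatest_eq_iff_of_forall_ge fun s hs => ?_
  have hrs : (r : ℝ) * c ≤ s * c := mul_le_mul_of_nonneg_right (Nat.cast_le.mpr hs) hc
  rw [countLE_update_of_le (hx.trans hrs) (by positivity)]

lemma one_le_stepUp_update_zero [DecidableEq ι] {c : ℝ} (hc : 0 ≤ c) (x : ι → ℝ) (i : ι) :
    1 ≤ stepUp c (Function.update x i 0) := by
  refine Nat.le_findGreatest (Fintype.card_pos_iff.mpr ⟨i⟩) ?_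
  refine Finset.card_pos.mpr ⟨i, ?_⟩
  simp [hc]

lemma countLE_comp_perm (x : ι → ℝ) (σ : Equiv.Perm ι) (t : ℝ) :
    countLE (x ∘ σ) t = countLE x t :=
  Finset.card_bijective σ σ.bijective (by simp)

end Counting

lemma _root_.csInf_range_le_iff_of_finite {ι α : Type*} [ConditionallyCompleteLinearOrder α]
    [Finite ι] [Nonempty ι] (g : ι → α) (a : α) :
    sInf (Set.range g) ≤ a ↔ ∃ i, g i ≤ a := by
  obtain ⟨i₀, hi₀⟩ := exists_eq_ciInf_of_finite (f := g)
  exact ⟨fun h => ⟨i₀, hi₀ ▸ h⟩,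
    fun ⟨i, hi⟩ => (ciInf_le (Set.finite_range g).bddBelow i).trans hi⟩

lemma sort_mul_div_le_iff {k : ℕ} (hk : 0 < k) (x : Fin k → ℝ) (i : Fin k) (α : ℝ) :
    k * x (Tuple.sort x i) / (i.1 + 1) ≤ α ↔ i.1 + 1 ≤ countLE x ((i.1 + 1 : ℕ) * (α / k)) := by
  have hk' : (0 : ℝ) < k := Nat.cast_pos.mpr hk
  rw [div_le_iff₀ (by positivity), ← le_div_iff₀' hk', Nat.add_one_le_iff,
    ← countLE_comp_perm x (Tuple.sort x), countLE,
    Tuple.lt_card_le_iff_apply_le_of_monotone (Tuple.monotone_sort x)]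
  simp only [Function.comp_apply]
  push_cast
  ring_nf

lemma sInf_simes_le_iff {k : ℕ} (hk : 0 < k) (x : Fin k → ℝ) (α : ℝ) :
    sInf {z : ℝ | ∃ i : Fin k, z = k * x (Tuple.sort x i) / (i.1 + 1)} ≤ α ↔
      0 < stepUp (α / k) x := by
  have : Nonempty (Fin k) := ⟨⟨0, hk⟩⟩
  have hS : {z : ℝ | ∃ i : Fin k, z = k * x (Tuple.sort x i) / (i.1 + 1)} =
      Set.range fun i : Fin k => k * x (Tuple.sort x i) / (i.1 + 1) := by
    ext z
    simp [eq_comm]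
  rw [hS, csInf_range_le_iff_of_finite, stepUp, Nat.findGreatest_pos, Fintype.card_fin]
  simp only [sort_mul_div_le_iff hk]
  constructor
  · rintro ⟨i, hi⟩
    exact ⟨i.1 + 1, Nat.succ_pos _, i.2, hi⟩
  · rintro ⟨n, hn0, hnk, hn⟩
    obtain ⟨m, rfl⟩ := Nat.exists_eq_add_of_lt hn0
    exact ⟨⟨m, by omega⟩, by simpa using hn⟩

lemma measurable_countLE {ι : Type*} [Fintype ι] (t : ℝ) :
    Measurable fun x : ι → ℝ => countLE x t := by
  simp only [countLE, Finset.card_filter]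
  exact Finset.measurable_sum _ fun j _ =>
    Measurable.ite (measurableSet_le (measurable_pi_apply j) measurable_const)
      measurable_const measurable_const

lemma measurable_stepUp {ι : Type*} [Fintype ι] (c : ℝ) :
    Measurable (stepUp c : (ι → ℝ) → ℕ) :=
  measurable_findGreatest fun _ _ => measurable_countLE _ measurableSet_Ici

lemma _root_.ProbabilityTheory.iIndepFun.indepFun_update {Ω ι β : Type*} [MeasurableSpace Ω]
    {μ : Measure Ω} [Fintype ι] [DecidableEq ι] [MeasurableSpace β]
    {f : ι → Ω → β} (hindep : iIndepFun f μ) (hf : ∀ i, Measurable (f i)) (i : ι) (a : β) :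
    IndepFun (f i) (fun ω => Function.update (fun j => f j ω) i a) μ := by
  have h := (hindep.indepFun_finset {i} {i}ᶜ disjoint_compl_right hf).comp
    (measurable_pi_apply ⟨i, Finset.mem_singleton_self i⟩)
    (measurable_pi_lambda (fun (y : ({i}ᶜ : Finset ι) → β) j =>
        if h : j ∈ ({i}ᶜ : Finset ι) then y ⟨j, h⟩ else a) fun j => by
      split_ifs
      · exact measurable_pi_apply _
      · exact measurable_const)
  convert h using 1
  · rfl
  · funext ω j
    rcases eq_or_ne j i with rfl | hj
    · simp
    · simp [hj]

lemma _root_.MeasureTheory.sum_measure_inter_eq_mul_of_card_eq {Ω ι : Type*} [MeasurableSpace Ω]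
    (μ : Measure Ω) [Fintype ι] {A : Set Ω} {B : ι → Set Ω}
    [∀ ω, DecidablePred fun i => ω ∈ B i] (hA : MeasurableSet A)
    (hB : ∀ i, MeasurableSet (B i)) {r : ℕ} (hr : ∀ ω ∈ A, #{i | ω ∈ B i} = r) :
    ∑ i, μ (A ∩ B i) = r * μ A := by
  calc ∑ i, μ (A ∩ B i) = ∑ i, ∫⁻ ω in A, (B i).indicator 1 ω ∂μ := by
        refine Finset.sum_congr rfl fun i _ => ?_
        rw [lintegral_indicator_one (hB i), Measure.restrict_apply (hB i), Set.inter_comm]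
    _ = ∫⁻ ω in A, ∑ i, (B i).indicator 1 ω ∂μ :=
        (lintegral_finsetSum _ fun i _ => measurable_one.indicator (hB i)).symm
    _ = ∫⁻ _ in A, (r : ENNReal) ∂μ := by
        refine setLIntegral_congr_fun hA fun ω hω => ?_
        simp only [Set.indicator_apply, Pi.one_apply, ← hr ω hω, Finset.card_filter]
        push_cast
        rfl
    _ = r * μ A := setLIntegral_const A _

section Probability

variable {Ω ι : Type*} [MeasurableSpace Ω] {μ : Measure Ω} [Fintype ι]

lemma sum_measure_stepUp_eq {X : Ω → ι → ℝ} (hX : Measurable X) (c : ℝ) :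
    ∑ r ∈ Finset.Icc 1 (Fintype.card ι), μ {ω | stepUp c (X ω) = r} =
      μ {ω | 0 < stepUp c (X ω)} := by
  refine (sum_measure_preimage_singleton _ fun r _ =>
    (measurable_stepUp c).comp hX (measurableSet_singleton r)).trans ?_
  congr 1
  ext ω
  simp [Nat.one_le_iff_ne_zero, Nat.pos_iff_ne_zero, stepUp_le_card]

lemma sum_measure_stepUp_update_zero [IsProbabilityMeasure μ] [DecidableEq ι] {P : ι → Ω → ℝ}
    (hmeas : ∀ i, Measurable (P i)) {c : ℝ} (hc : 0 ≤ c) (i : ι) :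
    ∑ r ∈ Finset.Icc 1 (Fintype.card ι),
      μ {ω | stepUp c (Function.update (fun j => P j ω) i 0) = r} = 1 := by
  rw [sum_measure_stepUp_eq (X := fun ω => Function.update (fun j => P j ω) i 0)
    (measurable_update_left.comp (measurable_pi_lambda _ hmeas))]
  convert measure_univ (μ := μ)
  ext ω
  simp [Nat.lt_iff_add_one_le, one_le_stepUp_update_zero hc]

lemma natCast_mul_measure_stepUp_eq [DecidableEq ι] {P : ι → Ω → ℝ}
    (hmeas : ∀ i, Measurable (P i)) (hindep : iIndepFun P μ) {c : ℝ} (hc : 0 ≤ c) (r : ℕ) :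
    r * μ {ω | stepUp c (fun j => P j ω) = r} =
      ∑ i, μ {ω | P i ω ≤ r * c} *
        μ {ω | stepUp c (Function.update (fun j => P j ω) i 0) = r} := by
  have hR : MeasurableSet {ω | stepUp c (fun j => P j ω) = r} :=
    (measurable_stepUp c).comp (measurable_pi_lambda _ hmeas) (measurableSet_singleton r)
  rw [← sum_measure_inter_eq_mul_of_card_eq μ hR
    (fun i => measurableSet_le (hmeas i) measurable_const)
    fun ω (hω : stepUp c _ = r) => hω ▸ countLE_stepUp hc _]
  refine Finset.sum_congr rfl fun i _ => ?_
  have hset : {ω | stepUp c (fun j => P j ω) = r} ∩ {ω | P i ω ≤ r * c} =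
      P i ⁻¹' Set.Iic (r * c) ∩
        (fun ω => Function.update (fun j => P j ω) i 0) ⁻¹' (stepUp c ⁻¹' {r}) := by
    ext ω
    simp only [Set.mem_inter_iff, Set.mem_ofPred_eq, Set.mem_preimage, Set.mem_Iic,
      Set.mem_singleton_iff]
    constructor
    · rintro ⟨hr, hle⟩
      exact ⟨hle, (stepUp_update_zero_eq_iff (x := fun j => P j ω) hc hle).mpr hr⟩
    · rintro ⟨hle, hr⟩
      exact ⟨(stepUp_update_zero_eq_iff (x := fun j => P j ω) hc hle).mp hr, hle⟩
  rw [hset, (hindep.indepFun_update hmeas i 0).measure_inter_preimage_eq_mul _ _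
    measurableSet_Iic ((measurable_stepUp c) (measurableSet_singleton r))]
  rfl

lemma measure_stepUp_pos_eq_sum [DecidableEq ι] {P : ι → Ω → ℝ} (hmeas : ∀ i, Measurable (P i))
    (hindep : iIndepFun P μ) {c : ℝ} (hc : 0 ≤ c) :
    μ {ω | 0 < stepUp c (fun j => P j ω)} =
      ∑ i, ∑ r ∈ Finset.Icc 1 (Fintype.card ι), (r : ENNReal)⁻¹ * μ {ω | P i ω ≤ r * c} *
        μ {ω | stepUp c (Function.update (fun j => P j ω) i 0) = r} := by
  rw [← sum_measure_stepUp_eq (measurable_pi_lambda _ hmeas), Finset.sum_comm]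
  refine Finset.sum_congr rfl fun r hr => ?_
  have hr0 : (r : ENNReal) ≠ 0 :=
    Nat.cast_ne_zero.mpr (Nat.one_le_iff_ne_zero.mp (Finset.mem_Icc.mp hr).1)
  simp_rw [mul_assoc, ← Finset.mul_sum, ← natCast_mul_measure_stepUp_eq hmeas hindep hc,
    ← mul_assoc, ENNReal.inv_mul_cancel hr0 (ENNReal.natCast_ne_top r), one_mul]

lemma inv_natCast_mul_ofReal_natCast_mul {r : ℕ} (hr : r ≠ 0) (c : ℝ) :
    (r : ENNReal)⁻¹ * ENNReal.ofReal (r * c) = ENNReal.ofReal c := by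
  rw [ENNReal.ofReal_mul (Nat.cast_nonneg r), ENNReal.ofReal_natCast, ← mul_assoc,
    ENNReal.inv_mul_cancel (Nat.cast_ne_zero.mpr hr) (ENNReal.natCast_ne_top r), one_mul]

lemma sum_sum_ofReal_mul_measure_stepUp_update_zero [IsProbabilityMeasure μ] [DecidableEq ι]
    {P : ι → Ω → ℝ} (hmeas : ∀ i, Measurable (P i)) {c : ℝ} (hc : 0 ≤ c) :
    ∑ i, ∑ r ∈ Finset.Icc 1 (Fintype.card ι), ENNReal.ofReal c *
        μ {ω | stepUp c (Function.update (fun j => P j ω) i 0) = r} =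
      ENNReal.ofReal (Fintype.card ι * c) := by
  simp_rw [← Finset.mul_sum]
  simp only [sum_measure_stepUp_update_zero hmeas hc, mul_one, Finset.sum_const,
    Finset.card_univ, nsmul_eq_mul, ENNReal.ofReal_mul (Nat.cast_nonneg _), ENNReal.ofReal_natCast]
  ring

theorem measure_stepUp_pos_le [IsProbabilityMeasure μ] [DecidableEq ι] {P : ι → Ω → ℝ}
    (hmeas : ∀ i, Measurable (P i)) (hindep : iIndepFun P μ) {c : ℝ} (hc : 0 ≤ c)
    (hvalid : ∀ i, ∀ r ∈ Finset.Icc 1 (Fintype.card ι),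
      μ {ω | P i ω ≤ r * c} ≤ ENNReal.ofReal (r * c)) :
    μ {ω | 0 < stepUp c (fun j => P j ω)} ≤ ENNReal.ofReal (Fintype.card ι * c) := by
  rw [measure_stepUp_pos_eq_sum hmeas hindep hc,
    ← sum_sum_ofReal_mul_measure_stepUp_update_zero (μ := μ) hmeas hc]
  gcongr with i _ r hr
  rw [← inv_natCast_mul_ofReal_natCast_mul (Nat.one_le_iff_ne_zero.mp (Finset.mem_Icc.mp hr).1) c]
  gcongr
  exact hvalid i r hr

theorem measure_stepUp_pos_eq [IsProbabilityMeasure μ] [DecidableEq ι] {P : ι → Ω → ℝ}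
    (hmeas : ∀ i, Measurable (P i)) (hindep : iIndepFun P μ) {c : ℝ} (hc : 0 ≤ c)
    (hunif : ∀ i, ∀ r ∈ Finset.Icc 1 (Fintype.card ι),
      μ {ω | P i ω ≤ r * c} = ENNReal.ofReal (r * c)) :
    μ {ω | 0 < stepUp c (fun j => P j ω)} = ENNReal.ofReal (Fintype.card ι * c) := by
  rw [measure_stepUp_pos_eq_sum hmeas hindep hc,
    ← sum_sum_ofReal_mul_measure_stepUp_update_zero (μ := μ) hmeas hc]
  refine Finset.sum_congr rfl fun i _ => Finset.sum_congr rfl fun r hr => ?_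
  rw [hunif i r hr,
    inv_natCast_mul_ofReal_natCast_mul (Nat.one_le_iff_ne_zero.mp (Finset.mem_Icc.mp hr).1)]

end Probability

end Simes

lemma Real.volume_restrict_Icc_Iic {a b t : ℝ} (ht : t ∈ Set.Icc a b) :
    volume.restrict (Set.Icc a b) (Set.Iic t) = ENNReal.ofReal (t - a) := by
  have hinter : Set.Iic t ∩ Set.Icc a b = Set.Icc a t :=
    Set.ext fun x => ⟨fun h => ⟨h.2.1, h.1⟩, fun h => ⟨h.2, h.1, h.2.trans ht.2⟩⟩
  rw [Measure.restrict_apply measurableSet_Iic, hinter, Real.volume_Icc]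

open Simes in
theorem simes_valid_general
    {Ω : Type*} [MeasurableSpace Ω] (μ : Measure Ω) [IsProbabilityMeasure μ]
    (k : ℕ) (hk : 0 < k) (P : Fin k → Ω → ℝ)
    (hmeas : ∀ i, Measurable (P i))
    (hindep : iIndepFun P μ)
    (hvalid : ∀ i, ∀ α ∈ Set.Icc (0:ℝ) 1, μ {ω | P i ω ≤ α} ≤ ENNReal.ofReal α) :
    (∀ α ∈ Set.Icc (0:ℝ) 1,
      μ {ω | sInf {x : ℝ | ∃ i : Fin k,
          x = k * (fun j => P j ω) (Tuple.sort (fun j => P j ω) i) / (i.1 + 1)} ≤ α}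
        ≤ ENNReal.ofReal α) ∧
    ((∀ i, μ.map (P i) = volume.restrict (Set.Icc (0:ℝ) 1)) →
      ∀ α ∈ Set.Icc (0:ℝ) 1,
        μ {ω | sInf {x : ℝ | ∃ i : Fin k,
            x = k * (fun j => P j ω) (Tuple.sort (fun j => P j ω) i) / (i.1 + 1)} ≤ α}
          = ENNReal.ofReal α) := by
  have hk' : (0 : ℝ) < k := Nat.cast_pos.mpr hk
  have hevent (α : ℝ) : {ω | sInf {x : ℝ | ∃ i : Fin k,
      x = k * (fun j => P j ω) (Tuple.sort (fun j => P j ω) i) / (i.1 + 1)} ≤ α} =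
        {ω | 0 < stepUp (α / k) (fun j => P j ω)} :=
    Set.ext fun ω => sInf_simes_le_iff hk (fun j => P j ω) α
  have hlevel (α : ℝ) : ENNReal.ofReal α = ENNReal.ofReal (Fintype.card (Fin k) * (α / k)) := by
    rw [Fintype.card_fin, mul_div_cancel₀ _ hk'.ne']
  have hthreshold {α : ℝ} (hα : α ∈ Set.Icc (0:ℝ) 1) {r : ℕ}
      (hr : r ∈ Finset.Icc 1 (Fintype.card (Fin k))) : (r : ℝ) * (α / k) ∈ Set.Icc (0:ℝ) 1 := by
    rw [Fintype.card_fin, Finset.mem_Icc] at hr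
    refine ⟨by have := hα.1; positivity, ?_⟩
    calc (r : ℝ) * (α / k) ≤ k * (α / k) := by gcongr; exacts [div_nonneg hα.1 hk'.le, hr.2]
      _ = α := mul_div_cancel₀ _ hk'.ne'
      _ ≤ 1 := hα.2
  refine ⟨fun α hα => ?_, fun hunif α hα => ?_⟩
  · rw [hevent, hlevel]
    exact measure_stepUp_pos_le hmeas hindep (div_nonneg hα.1 hk'.le)
      fun i r hr => hvalid i _ (hthreshold hα hr)
  · rw [hevent, hlevel]
    refine measure_stepUp_pos_eq hmeas hindep (div_nonneg hα.1 hk'.le) fun i r hr => ?_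
    calc μ {ω | P i ω ≤ r * (α / k)} = μ.map (P i) (Set.Iic (r * (α / k))) :=
          (Measure.map_apply (hmeas i) measurableSet_Iic).symm
      _ = ENNReal.ofReal (r * (α / k)) := by
          rw [hunif i, Real.volume_restrict_Icc_Iic (hthreshold hα hr), sub_zero]

theorem simes_valid
    {Ω : Type*} [MeasurableSpace Ω] (μ : Measure Ω) [IsProbabilityMeasure μ]
    (k : ℕ) (hk : 0 < k) (P : Fin k → Ω → ℝ)
    (hmeas : ∀ i, Measurable (P i))
    (hrange : ∀ i ω, P i ω ∈ Set.Icc (0:ℝ) 1)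
    (hindep : iIndepFun P μ)
    (hvalid : ∀ i, ∀ α ∈ Set.Icc (0:ℝ) 1, μ {ω | P i ω ≤ α} ≤ ENNReal.ofReal α) :
    (∀ α ∈ Set.Icc (0:ℝ) 1,
      μ {ω | sInf {x : ℝ | ∃ i : Fin k,
          x = k * (fun j => P j ω) (Tuple.sort (fun j => P j ω) i) / (i.1 + 1)} ≤ α}
        ≤ ENNReal.ofReal α) ∧
    ((∀ i, μ.map (P i) = volume.restrict (Set.Icc (0:ℝ) 1)) →
      ∀ α ∈ Set.Icc (0:ℝ) 1,
        μ {ω | sInf {x : ℝ | ∃ i : Fin k,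
            x = k * (fun j => P j ω) (Tuple.sort (fun j => P j ω) i) / (i.1 + 1)} ≤ α}
          = ENNReal.ofReal α) :=
  simes_valid_general μ k hk P hmeas hindep hvalid
end

section
/- (Monotone nesting of Simes BHPC p-values.) For any p₁,…,pₙ ∈ [0,1] with sorted values p_{(1)} ≤ … ≤ p_{(n)}, define for each r ∈ {1,…,n} the Simes BHPC p-value p_{r/n} = min over i ∈ {r,…,n} of ((n−r+1) · p_{(i)} / (i − r + 1)). Then p_{1/n} ≤ p_{2/n} ≤ … ≤ p_{n/n}. Consequently the set {r : p_{r/n} ≤ α} is of the form {1,…,r̂} for r̂ = max{r : p_{r/n} ≤ α}, so [r̂, n] is an interval. -/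
theorem simes_bhpc_monotone_in_r
    (n : ℕ) (hn : 0 < n) (p : Fin n → ℝ)
    (hp : ∀ i, p i ∈ Set.Icc (0:ℝ) 1)
    (q : ℕ → ℝ)
    (hq : ∀ r : ℕ, q r = sInf {x : ℝ | ∃ i : Fin n, r - 1 ≤ i.1 ∧
      x = ((n - r + 1 : ℕ) : ℝ) * p (Tuple.sort p i) / ((i.1 + 2 - r : ℕ) : ℝ)}) :
    (∀ r : ℕ, 1 ≤ r → r < n → q r ≤ q (r + 1)) ∧
    (∀ α : ℝ, ∀ r r' : ℕ, 1 ≤ r → r ≤ r' → r' ≤ n → q r' ≤ α → q r ≤ α) := by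
  have hbdd : ∀ r : ℕ, r ≤ n → BddBelow {x : ℝ | ∃ i : Fin n, r - 1 ≤ i.1 ∧
      x = ((n - r + 1 : ℕ) : ℝ) * p (Tuple.sort p i) / ((i.1 + 2 - r : ℕ) : ℝ)} := by
    intro r hr
    refine ⟨0, ?_⟩
    rintro x ⟨i, hi, rfl⟩
    exact div_nonneg (mul_nonneg (by positivity) (hp _).1) (by positivity)
  have hmono : ∀ r : ℕ, 1 ≤ r → r < n → q r ≤ q (r + 1) := by
    intro r h1 h2
    rw [hq r, hq (r + 1)]
    apply le_csInf
    · refine ⟨_, ⟨⟨n - 1, by omega⟩, by simp; omega, rfl⟩⟩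
    · rintro x ⟨i, hi, rfl⟩
      have hir : r ≤ i.1 := by omega
      have hin : i.1 < n := i.2
      refine le_trans (csInf_le (hbdd r (le_of_lt h2)) ⟨i, by omega, rfl⟩) ?_
      set pi := p (Tuple.sort p i) with hpi
      have hp0 : 0 ≤ pi := (hp _).1
      have e1 : ((n - r + 1 : ℕ) : ℝ) = (n : ℝ) - r + 1 := by
        push_cast [Nat.cast_sub (by omega : r ≤ n)]; ring
      have e2 : ((i.1 + 2 - r : ℕ) : ℝ) = (i.1 : ℝ) + 2 - r := by
        push_cast [Nat.cast_sub (by omega : r ≤ i.1 + 2)]; ring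
      have e3 : ((n - (r + 1) + 1 : ℕ) : ℝ) = (n : ℝ) - r := by
        push_cast [Nat.cast_sub (by omega : r + 1 ≤ n)]; ring
      have e4 : ((i.1 + 2 - (r + 1) : ℕ) : ℝ) = (i.1 : ℝ) + 1 - r := by
        rw [show i.1 + 2 - (r + 1) = i.1 + 1 - r by omega,
          Nat.cast_sub (by omega : r ≤ i.1 + 1)]; push_cast; ring
      rw [e1, e2, e3, e4]
      have hd1 : (0:ℝ) < (i.1 : ℝ) + 2 - r := by
        have : (r:ℝ) ≤ i.1 := by exact_mod_cast hir
        linarith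
      have hd2 : (0:ℝ) < (i.1 : ℝ) + 1 - r := by
        have : (r:ℝ) ≤ i.1 := by exact_mod_cast hir
        linarith
      rw [div_le_div_iff₀ hd1 hd2]
      have hcn : (i.1:ℝ) + 1 ≤ n := by exact_mod_cast hin
      nlinarith [mul_nonneg hp0 (sub_nonneg.mpr hcn)]
  refine ⟨hmono, ?_⟩
  intro α r r' h1 hrr' hr'n hα
  have key : ∀ k : ℕ, r + k ≤ n → q r ≤ q (r + k) := by
    intro k
    induction k with
    | zero => intro _; exact le_refl (q r)
    | succ k ih =>
      intro hk
      exact le_trans (ih (by omega)) (hmono (r + k) (by omega) (by omega))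
  have := key (r' - r) (by omega)
  rw [show r + (r' - r) = r' by omega] at this
  exact le_trans this hα
end

section
/- (Bonferroni-over-groups GBHPC validity.) Partition {1,…,n} into groups I₁,…,I_m and suppose that for each group i, the vector (Pⱼ)_{j ∈ Iᵢ} consists of p-values that are jointly valid for combination within the group: for each nonempty v ⊆ Iᵢ with all component nulls in v true, a given combination p_{v,i} of (Pⱼ)_{j ∈ v} satisfies Pr(p_{v,i} ≤ α) ≤ α. For u ⊆ {1,…,n} with |u| = n−r+1, define g_u(p_u) = |{i : u ∩ Iᵢ ≠ ∅}| · minᵢ p_{u∩Iᵢ, i} (minimum over groups intersecting u). Then whenever θⱼ lies in the component null for all j ∈ u, Pr(g_u(P_u) ≤ α) ≤ α for all α ∈ [0,1]; hence f*(p) = max over u of g_u(p_u) is a valid p-value for H₀^{r/n} regardless of dependence across groups. -/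
open MeasureTheory
open scoped Classical

theorem bonferroni_over_groups_gbhpc_valid
    {Ω Θ' : Type*} [MeasurableSpace Ω] (n r m : ℕ) (hr1 : 1 ≤ r) (hrn : r ≤ n)
    (I : Fin m → Finset (Fin n))
    (hdisj : ∀ i j : Fin m, i ≠ j → Disjoint (I i) (I j))
    (hcover : ∀ j : Fin n, ∃ i : Fin m, j ∈ I i)
    (Pr : (Fin n → Θ') → Measure Ω) (hprob : ∀ θ, IsProbabilityMeasure (Pr θ))
    (Θ0 : Fin n → Set Θ')
    (pv : Fin m → Finset (Fin n) → Ω → ℝ)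
    (hpv_valid : ∀ θ : Fin n → Θ', ∀ i : Fin m, ∀ v ⊆ I i, v.Nonempty →
      (∀ j ∈ v, θ j ∈ Θ0 j) →
      ∀ α ∈ Set.Icc (0:ℝ) 1, Pr θ {ω | pv i v ω ≤ α} ≤ ENNReal.ofReal α)
    (gdef : Finset (Fin n) → Ω → ℝ)
    (hg : ∀ u ω, gdef u ω =
      ((Finset.univ.filter (fun i : Fin m => (u ∩ I i).Nonempty)).card : ℝ) *
        sInf {x : ℝ | ∃ i : Fin m, (u ∩ I i).Nonempty ∧ x = pv i (u ∩ I i) ω}) :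
    (∀ u : Finset (Fin n), u.card = n - r + 1 →
      ∀ θ : Fin n → Θ', (∀ j ∈ u, θ j ∈ Θ0 j) →
        ∀ α ∈ Set.Icc (0:ℝ) 1,
          Pr θ {ω | gdef u ω ≤ α} ≤ ENNReal.ofReal α) ∧
    (∀ θ : Fin n → Θ',
      (Finset.univ.filter (fun i => θ i ∉ Θ0 i)).card ≤ r - 1 →
      ∀ α ∈ Set.Icc (0:ℝ) 1,
        Pr θ {ω | sSup {x : ℝ | ∃ u : Finset (Fin n),
            u.card = n - r + 1 ∧ x = gdef u ω} ≤ α} ≤ ENNReal.ofReal α) := by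

  have hpart1 : ∀ u : Finset (Fin n), u.card = n - r + 1 →
      ∀ θ : Fin n → Θ', (∀ j ∈ u, θ j ∈ Θ0 j) →
        ∀ α ∈ Set.Icc (0:ℝ) 1,
          Pr θ {ω | gdef u ω ≤ α} ≤ ENNReal.ofReal α := by
    intro u hu θ hθ α hα
    obtain ⟨hα0, hα1⟩ := hα
    have hune : u.Nonempty := by
      rw [← Finset.card_pos, hu]; omega
    set S := Finset.univ.filter (fun i : Fin m => (u ∩ I i).Nonempty) with hS
    have hSne : S.Nonempty := by
      obtain ⟨j, hj⟩ := hune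
      obtain ⟨i, hi⟩ := hcover j
      exact ⟨i, Finset.mem_filter.2 ⟨Finset.mem_univ _, ⟨j, Finset.mem_inter.2 ⟨hj, hi⟩⟩⟩⟩
    have hkpos : 0 < S.card := Finset.card_pos.2 hSne
    have hk1 : (1:ℝ) ≤ S.card := by exact_mod_cast hkpos
    have hkpos' : (0:ℝ) < S.card := by linarith
    have hαk0 : 0 ≤ α / S.card := div_nonneg hα0 (le_of_lt hkpos')
    have hαk1 : α / S.card ≤ 1 := by
      rw [div_le_one hkpos']; linarith
    have hsub : {ω | gdef u ω ≤ α} ⊆ ⋃ i ∈ S, {ω | pv i (u ∩ I i) ω ≤ α / S.card} := by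
      intro ω hω
      simp only [Set.mem_setOf_eq] at hω
      rw [hg] at hω
      set T := {x : ℝ | ∃ i : Fin m, (u ∩ I i).Nonempty ∧ x = pv i (u ∩ I i) ω} with hT
      have hTfin : T.Finite := by
        apply (Set.finite_range (fun i : Fin m => pv i (u ∩ I i) ω)).subset
        rintro x ⟨i, -, rfl⟩; exact ⟨i, rfl⟩
      have hTne : T.Nonempty := by
        obtain ⟨i, hi⟩ := hSne
        exact ⟨pv i (u ∩ I i) ω, i, (Finset.mem_filter.1 hi).2, rfl⟩
      obtain ⟨i, hiu, hieq⟩ := hTne.csInf_mem hTfin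
      have hle : sInf T ≤ α / S.card := by
        rw [le_div_iff₀ hkpos']
        calc sInf T * S.card = (S.card : ℝ) * sInf T := mul_comm _ _
          _ ≤ α := hω
      have hiS : i ∈ S := Finset.mem_filter.2 ⟨Finset.mem_univ _, hiu⟩
      exact Set.mem_biUnion hiS (by simpa [← hieq] using hle)
    calc Pr θ {ω | gdef u ω ≤ α}
        ≤ Pr θ (⋃ i ∈ S, {ω | pv i (u ∩ I i) ω ≤ α / S.card}) := measure_mono hsub
      _ ≤ ∑ i ∈ S, Pr θ {ω | pv i (u ∩ I i) ω ≤ α / S.card} := measure_biUnion_finset_le _ _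
      _ ≤ ∑ _i ∈ S, ENNReal.ofReal (α / S.card) := by
          refine Finset.sum_le_sum (fun i hi => ?_)
          exact hpv_valid θ i (u ∩ I i) Finset.inter_subset_right
            ((Finset.mem_filter.1 hi).2)
            (fun j hj => hθ j (Finset.mem_inter.1 hj).1)
            (α / S.card) ⟨hαk0, hαk1⟩
      _ = S.card • ENNReal.ofReal (α / S.card) := by rw [Finset.sum_const]
      _ = ENNReal.ofReal α := by
          rw [nsmul_eq_mul, ← ENNReal.ofReal_natCast S.card,
            ← ENNReal.ofReal_mul (Nat.cast_nonneg _),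
            mul_div_cancel₀ _ (ne_of_gt hkpos')]
  refine ⟨hpart1, ?_⟩
  intro θ hθ α hα
  have hsplit : (Finset.univ.filter (fun i : Fin n => θ i ∈ Θ0 i)).card +
      (Finset.univ.filter (fun i : Fin n => θ i ∉ Θ0 i)).card = n := by
    rw [Finset.card_filter_add_card_filter_not, Finset.card_univ, Fintype.card_fin]
  have hN : n - r + 1 ≤ (Finset.univ.filter (fun i : Fin n => θ i ∈ Θ0 i)).card := by omega
  obtain ⟨u, huN, hucard⟩ := Finset.exists_subset_card_eq hN
  have hθu : ∀ j ∈ u, θ j ∈ Θ0 j := fun j hj => (Finset.mem_filter.1 (huN hj)).2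
  have hsub : {ω | sSup {x : ℝ | ∃ u' : Finset (Fin n),
      u'.card = n - r + 1 ∧ x = gdef u' ω} ≤ α} ⊆ {ω | gdef u ω ≤ α} := by
    intro ω hω
    simp only [Set.mem_setOf_eq] at hω ⊢
    have hfin : {x : ℝ | ∃ u' : Finset (Fin n), u'.card = n - r + 1 ∧ x = gdef u' ω}.Finite := by
      apply (Set.finite_range (fun u' : Finset (Fin n) => gdef u' ω)).subset
      rintro x ⟨u', -, rfl⟩; exact ⟨u', rfl⟩
    exact le_trans (le_csSup hfin.bddAbove ⟨u, hucard, rfl⟩) hω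
  exact le_trans (measure_mono hsub) (hpart1 u hucard θ hθu α hα)
end
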